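/- Under the GT-SAGA setup, for every k ≥ 0, almost surely E[‖ḡ^k‖² | F^k] ≤ (2L²/n²)·‖x^k − Jx^k‖² + (2L²/n)·t^k + ‖∇f̄(x^k)‖². -/

import Mathlib

/-!
Conditionally on `F^k` the iterates `x^k, z^k` are frozen, and `ḡ^k` is the average of the
`n` independent draws `g_i^k = G_i(τ_i^k)`, each uniform over the `m` SAGA directions
`G_i(1), …, G_i(m)`, whose mean is `∇f_i(x_i^k)`. Expanding `‖ḡ^k‖²` into pairs, the
off-diagonal pairs contribute `‖∇f̄(x^k)‖²` and the diagonal ones the variances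
`Var_i / n²`. The control variate shifts all directions of node `i` by the same vector, so
`Var_i ≤ (1/m) Σ_j ‖∇f_{i,j}(x_i) - ∇f_{i,j}(z_{i,j})‖² ≤ (L²/m) Σ_j ‖x_i - z_{i,j}‖²`,
and splitting `x_i - z_{i,j}` at `x̄^k` gives the two remaining terms.
-/

open MeasureTheory ProbabilityTheory Finset Filter
open scoped ENNReal RealInnerProductSpace

noncomputable section

/-- The second largest singular value of a doubly stochastic matrix `w`, realized as the
operator norm of `w - (1/n) 𝟙ₙ 𝟙ₙᵀ` acting on `EuclideanSpace ℝ (Fin n)`. -/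
def secondSV {n : ℕ} (w : Matrix (Fin n) (Fin n) ℝ) : ℝ :=
  ‖LinearMap.toContinuousLinearMap
      (Matrix.toEuclideanLin (w - Matrix.of fun _ _ => (n : ℝ)⁻¹))‖

/-- The average `(1/n) ∑ᵢ vᵢ` of the blocks of a stacked vector `v ∈ ℝ^{np}`. -/
def blockAvg {n p : ℕ} (v : Fin n → EuclideanSpace ℝ (Fin p)) : EuclideanSpace ℝ (Fin p) :=
  (n : ℝ)⁻¹ • ∑ i, v i

/-- `‖v - J v‖²` for a stacked vector `v ∈ ℝ^{np}`, where `J = ((1/n) 𝟙ₙ 𝟙ₙᵀ) ⊗ Iₚ`. -/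
def consSq {n p : ℕ} (v : Fin n → EuclideanSpace ℝ (Fin p)) : ℝ :=
  ∑ i, ‖v i - blockAvg v‖ ^ 2

/-- `(W - J) v`, blockwise, where `W = w ⊗ Iₚ` and `J = ((1/n) 𝟙ₙ 𝟙ₙᵀ) ⊗ Iₚ`. -/
def WJapp {n p : ℕ} (w : Matrix (Fin n) (Fin n) ℝ) (v : Fin n → EuclideanSpace ℝ (Fin p)) :
    Fin n → EuclideanSpace ℝ (Fin p) :=
  fun i => (∑ r, w i r • v r) - blockAvg v

/-- The local batch function `fᵢ := (1/m) ∑ⱼ f_{i,j}`. -/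
def floc {n m p : ℕ} (f : Fin n → Fin m → EuclideanSpace ℝ (Fin p) → ℝ) (i : Fin n) :
    EuclideanSpace ℝ (Fin p) → ℝ :=
  fun u => (m : ℝ)⁻¹ * ∑ j, f i j u

/-- The global function `F := (1/n) ∑ᵢ fᵢ`. -/
def fglob {n m p : ℕ} (f : Fin n → Fin m → EuclideanSpace ℝ (Fin p) → ℝ) :
    EuclideanSpace ℝ (Fin p) → ℝ :=
  fun u => (n : ℝ)⁻¹ * ∑ i, floc f i u

/-- `F* := inf_x F(x)`. -/
def Fstar {n m p : ℕ} (f : Fin n → Fin m → EuclideanSpace ℝ (Fin p) → ℝ) : ℝ :=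
  ⨅ u, fglob f u

/-- `∇f̄(x) := (1/n) ∑ᵢ ∇fᵢ(xᵢ)`. -/
def gradfbar {n m p : ℕ} (f : Fin n → Fin m → EuclideanSpace ℝ (Fin p) → ℝ)
    (v : Fin n → EuclideanSpace ℝ (Fin p)) : EuclideanSpace ℝ (Fin p) :=
  (n : ℝ)⁻¹ • ∑ i, gradient (floc f i) (v i)

/-- The auxiliary quantity `t := (1/n) ∑ᵢ (1/m) ∑ⱼ ‖x̄ - z_{i,j}‖²`. -/
def tAux {n m p : ℕ} (xbar : EuclideanSpace ℝ (Fin p))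
    (z : Fin n → Fin m → EuclideanSpace ℝ (Fin p)) : ℝ :=
  (n : ℝ)⁻¹ * ∑ i, (m : ℝ)⁻¹ * ∑ j, ‖xbar - z i j‖ ^ 2

/-- The filtration `F^k := σ(τᵢᵗ, sᵢᵗ : i ∈ V, t ≤ k-1)`, with `F⁰` trivial. -/
def gtFilt {Ω : Type*} {n m : ℕ} (τ s : Fin n → ℕ → Ω → Fin m) (k : ℕ) :
    MeasurableSpace Ω :=
  ⨆ (i : Fin n) (t : ℕ) (_ : t < k),
    MeasurableSpace.comap (τ i t) ⊤ ⊔ MeasurableSpace.comap (s i t) ⊤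

theorem norm_sub_sq_le_two_mul_add {E : Type*} [SeminormedAddGroup E] (a b c : E) :
    ‖a - b‖ ^ 2 ≤ 2 * ‖a - c‖ ^ 2 + 2 * ‖c - b‖ ^ 2 := by
  have h := norm_sub_le_norm_sub_add_norm_sub a c b
  nlinarith [add_sq_le (a := ‖a - c‖) (b := ‖c - b‖), norm_nonneg (a - b)]

section InnerProduct

variable {ι E : Type*} [Fintype ι] [NormedAddCommGroup E] [InnerProductSpace ℝ E]

theorem norm_sum_sq_eq_sum_sum_inner (v : ι → E) :
    ‖∑ i, v i‖ ^ 2 = ∑ i, ∑ i', ⟪v i, v i'⟫ := by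
  simp_rw [← real_inner_self_eq_norm_sq, sum_inner, inner_sum]

theorem sum_sum_ite_inner_eq [DecidableEq ι] (v : ι → E) (A : ι → ℝ) :
    ∑ i, ∑ i', (if i = i' then A i else ⟪v i, v i'⟫)
      = ‖∑ i, v i‖ ^ 2 + ∑ i, (A i - ‖v i‖ ^ 2) := by
  have h : ∀ i i', (if i = i' then A i else ⟪v i, v i'⟫)
      = ⟪v i, v i'⟫ + if i = i' then A i - ‖v i‖ ^ 2 else 0 := by
    intro i i'
    split_ifs with h
    · subst h; rw [real_inner_self_eq_norm_sq]; ring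
    · rw [add_zero]
  simp_rw [h, sum_add_distrib, sum_ite_eq, mem_univ, if_true, norm_sum_sq_eq_sum_sum_inner]

theorem mean_norm_sq_add_sub_norm_mean_sq_le [Nonempty ι] (u : ι → E) (c : E) :
    (Fintype.card ι : ℝ)⁻¹ * ∑ j, ‖u j + c‖ ^ 2
        - ‖(Fintype.card ι : ℝ)⁻¹ • ∑ j, (u j + c)‖ ^ 2
      ≤ (Fintype.card ι : ℝ)⁻¹ * ∑ j, ‖u j‖ ^ 2 := by
  set N : ℝ := (Fintype.card ι : ℝ)
  have hN : N ≠ 0 := by positivity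
  set ū := N⁻¹ • ∑ j, u j
  have hmean : N⁻¹ • ∑ j, (u j + c) = ū + c := by
    rw [sum_add_distrib, smul_add, sum_const, card_univ, ← Nat.cast_smul_eq_nsmul ℝ, smul_smul,
      inv_mul_cancel₀ hN, one_smul]
  have hsum : ∑ j, ‖u j + c‖ ^ 2 = ∑ j, ‖u j‖ ^ 2 + 2 * N * ⟪ū, c⟫ + N * ‖c‖ ^ 2 := by
    simp_rw [norm_add_sq_real, sum_add_distrib, ← mul_sum, ← sum_inner, sum_const, card_univ,
      nsmul_eq_mul]
    simp only [ū, inner_smul_left, RCLike.conj_to_real]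
    field_simp
    ring
  have hexpand : N⁻¹ * (∑ j, ‖u j‖ ^ 2 + 2 * N * ⟪ū, c⟫ + N * ‖c‖ ^ 2)
      = N⁻¹ * ∑ j, ‖u j‖ ^ 2 + 2 * ⟪ū, c⟫ + ‖c‖ ^ 2 := by
    field_simp
  rw [hmean, hsum, norm_add_sq_real, hexpand]
  linarith [sq_nonneg ‖ū‖]

end InnerProduct

theorem MeasureTheory.MemLp.integrable_inner {α E : Type*} [MeasurableSpace α] {μ : Measure α}
    [NormedAddCommGroup E] [InnerProductSpace ℝ E] {f g : α → E} (hf : MemLp f 2 μ)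
    (hg : MemLp g 2 μ) : Integrable (fun x => ⟪f x, g x⟫) μ :=
  (L2.integrable_inner (hf.toLp f) (hg.toLp g)).congr <| by
    filter_upwards [hf.coeFn_toLp, hg.coeFn_toLp] with x h1 h2
    rw [h1, h2]

theorem Measurable.comp_countable_index {Ω ι β : Type*} {mΩ : MeasurableSpace Ω}
    [MeasurableSpace ι] [Countable ι] [MeasurableSingletonClass ι] [MeasurableSpace β]
    {ξ : Ω → ι} {h : ι → Ω → β}
    (hξ : Measurable ξ) (hh : ∀ a, Measurable (h a)) : Measurable fun ω => h (ξ ω) ω :=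
  (measurable_from_prod_countable_left (f := fun q : Ω × ι => h q.2 q.1) hh).comp
    (measurable_id.prodMk hξ)

theorem condExp_comp_indep_eq_sum {Ω ι : Type*} {F m₀ : MeasurableSpace Ω} {μ : Measure Ω}
    [IsFiniteMeasure μ] [Fintype ι] [MeasurableSpace ι] [MeasurableSingletonClass ι]
    {ξ : Ω → ι} {h : ι → Ω → ℝ} (hF : F ≤ m₀) (hξ : Measurable ξ)
    (hind : Indep (MeasurableSpace.comap ξ ‹_›) F μ) (hh : ∀ a, StronglyMeasurable[F] (h a))
    (hint : Integrable (fun ω => h (ξ ω) ω) μ) :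
    μ[fun ω => h (ξ ω) ω | F] =ᵐ[μ] fun ω => ∑ a, μ.real (ξ ⁻¹' {a}) * h a ω := by
  set e : ι → Ω → ℝ := fun a => (ξ ⁻¹' {a}).indicator 1
  have he_sm : ∀ a, StronglyMeasurable[MeasurableSpace.comap ξ ‹_›] (e a) :=
    fun a => stronglyMeasurable_one.indicator ⟨{a}, measurableSet_singleton a, rfl⟩
  have he_int : ∀ a, Integrable (e a) μ :=
    fun a => (integrable_const 1).indicator (hξ (measurableSet_singleton a))
  have hdecomp : (fun ω => h (ξ ω) ω) = ∑ a, h a * e a := by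
    ext ω
    rw [Finset.sum_apply, Finset.sum_eq_single (ξ ω)]
    · simp [e, Set.indicator_of_mem]
    · intro b _ hb
      simp [e, Set.indicator_of_notMem, Ne.symm hb]
    · simp
  have hterm_int : ∀ a, Integrable (h a * e a) μ := by
    intro a
    refine hint.mono (((hh a).mono hF).aestronglyMeasurable.mul
      (he_int a).aestronglyMeasurable) (ae_of_all _ fun ω => ?_)
    by_cases hω : ξ ω = a <;> simp [e, hω]
  have hterm : ∀ a, μ[h a * e a | F] =ᵐ[μ] fun ω => μ.real (ξ ⁻¹' {a}) * h a ω := by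
    intro a
    have hcond : μ[e a | F] =ᵐ[μ] fun _ => μ.real (ξ ⁻¹' {a}) := by
      refine (condExp_indep_eq (measurable_iff_comap_le.mp hξ) hF
        (he_sm a) hind).trans ?_
      rw [integral_indicator_one (hξ (measurableSet_singleton a))]
    filter_upwards [condExp_mul_of_stronglyMeasurable_left (hh a) (hterm_int a) (he_int a),
      hcond] with ω h1 h2
    rw [h1, Pi.mul_apply, h2, mul_comm]
  rw [hdecomp]
  filter_upwards [condExp_finsetSum (fun a _ => hterm_int a) F, ae_all_iff.mpr hterm] with ω h1 h2
  rw [h1, Finset.sum_apply]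
  exact Finset.sum_congr rfl fun a _ => h2 a

section Filtration

variable {Ω : Type*} {n m : ℕ} {τ s : Fin n → ℕ → Ω → Fin m}

theorem gtFilt_mono : Monotone (gtFilt τ s) := fun _ _ h =>
  iSup₂_le fun i t => iSup_le fun ht => le_iSup₂_of_le i t (le_iSup_of_le (ht.trans_le h) le_rfl)

theorem comap_tau_le_gtFilt {i : Fin n} {t k : ℕ} (ht : t < k) :
    MeasurableSpace.comap (τ i t) ⊤ ≤ gtFilt τ s k :=
  le_sup_left.trans (le_iSup₂_of_le i t (le_iSup_of_le ht le_rfl))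

theorem comap_s_le_gtFilt {i : Fin n} {t k : ℕ} (ht : t < k) :
    MeasurableSpace.comap (s i t) ⊤ ≤ gtFilt τ s k :=
  le_sup_right.trans (le_iSup₂_of_le i t (le_iSup_of_le ht le_rfl))

variable [MeasurableSpace Ω]

theorem gtFilt_le (hτ : ∀ i t, Measurable (τ i t)) (hs : ∀ i t, Measurable (s i t)) (k : ℕ) :
    gtFilt τ s k ≤ ‹MeasurableSpace Ω› :=
  iSup₂_le fun i t => iSup_le fun _ =>
    sup_le (measurable_iff_comap_le.mp (hτ i t)) (measurable_iff_comap_le.mp (hs i t))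

end Filtration

section Sampling

variable {Ω : Type*} [MeasurableSpace Ω] {n m : ℕ}

structure IsGTSagaSampling (P : Measure Ω) (τ s : Fin n → ℕ → Ω → Fin m) : Prop where
  measurable_tau : ∀ i t, Measurable (τ i t)
  measurable_s : ∀ i t, Measurable (s i t)
  tau_uniform : ∀ i t a, P {ω | τ i t ω = a} = (m : ℝ≥0∞)⁻¹
  indep : iIndepFun
    (fun (q : Fin n × ℕ × Bool) ω => if q.2.2 then τ q.1 q.2.1 ω else s q.1 q.2.1 ω) P

variable {P : Measure Ω} {τ s : Fin n → ℕ → Ω → Fin m}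

namespace IsGTSagaSampling

theorem indep_tau_pair_gtFilt (h : IsGTSagaSampling P τ s) (k : ℕ) (i i' : Fin n) :
    Indep (MeasurableSpace.comap (fun ω => (τ i k ω, τ i' k ω)) inferInstance)
      (gtFilt τ s k) P := by
  set φ : Fin n × ℕ × Bool → Ω → Fin m :=
    fun q ω => if q.2.2 then τ q.1 q.2.1 ω else s q.1 q.2.1 ω
  have hφ_le : ∀ q, MeasurableSpace.comap (φ q) ⊤ ≤ ‹MeasurableSpace Ω› := by
    rintro ⟨a, t, _ | _⟩
    exacts [measurable_iff_comap_le.mp (h.measurable_s a t),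
      measurable_iff_comap_le.mp (h.measurable_tau a t)]
  have hdisj : Disjoint {q : Fin n × ℕ × Bool | q.2.1 = k} {q | q.2.1 < k} :=
    Set.disjoint_left.mpr fun q hk hlt => (Nat.ne_of_lt hlt) hk
  have hle {S : Set (Fin n × ℕ × Bool)} {q} (hq : q ∈ S) :
      MeasurableSpace.comap (φ q) ⊤ ≤ ⨆ q ∈ S, MeasurableSpace.comap (φ q) ⊤ :=
    le_iSup₂_of_le (f := fun q _ => MeasurableSpace.comap (φ q) ⊤) q hq le_rfl
  refine indep_of_indep_of_le_right (indep_of_indep_of_le_left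
    (indep_iSup_of_disjoint hφ_le ((iIndepFun_iff_iIndep _ _ _).mp h.indep) hdisj) ?_) ?_
  · exact (MeasurableSpace.comap_prodMk (τ i k) (τ i' k)).le.trans <|
      sup_le (hle (q := (i, k, true)) rfl) (hle (q := (i', k, true)) rfl)
  · exact iSup₂_le fun a t => iSup_le fun ht =>
      sup_le (hle (q := (a, t, true)) ht) (hle (q := (a, t, false)) ht)

theorem measureReal_tau_pair_eq (h : IsGTSagaSampling P τ s) (k : ℕ) (i i' : Fin n)
    (a b : Fin m) :
    P.real ((fun ω => (τ i k ω, τ i' k ω)) ⁻¹' {(a, b)})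
      = if i = i' then (if a = b then (m : ℝ)⁻¹ else 0) else (m : ℝ)⁻¹ * (m : ℝ)⁻¹ := by
  have hpre : (fun ω => (τ i k ω, τ i' k ω)) ⁻¹' {(a, b)} = τ i k ⁻¹' {a} ∩ τ i' k ⁻¹' {b} := by
    ext ω; simp
  rw [hpre]
  split_ifs with hi hab
  · subst hi hab
    rw [Set.inter_self, measureReal_def]
    simp [Set.preimage, h.tau_uniform]
  · subst hi
    rw [← Set.preimage_inter, Set.singleton_inter_of_notMem (by simpa using hab)]
    simp
  · have hind : IndepFun (τ i k) (τ i' k) P :=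
      h.indep.indepFun (i := (i, k, true)) (j := (i', k, true)) (by simp [hi])
    rw [measureReal_def, hind.measure_inter_preimage_eq_mul _ _
      (measurableSet_singleton a) (measurableSet_singleton b)]
    simp [Set.preimage, h.tau_uniform]

variable [IsProbabilityMeasure P] {k : ℕ}

theorem condExp_inner_tau_pair (h : IsGTSagaSampling P τ s) {E : Type*} [NormedAddCommGroup E]
    [InnerProductSpace ℝ E] {G : Fin n → Fin m → Ω → E}
    (hG : ∀ i a, StronglyMeasurable[gtFilt τ s k] (G i a)) (i i' : Fin n)
    (hint : Integrable (fun ω => ⟪G i (τ i k ω) ω, G i' (τ i' k ω) ω⟫) P) :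
    P[fun ω => ⟪G i (τ i k ω) ω, G i' (τ i' k ω) ω⟫ | gtFilt τ s k] =ᵐ[P] fun ω =>
      if i = i' then (m : ℝ)⁻¹ * ∑ a, ‖G i a ω‖ ^ 2
      else ⟪(m : ℝ)⁻¹ • ∑ a, G i a ω, (m : ℝ)⁻¹ • ∑ b, G i' b ω⟫ := by
  filter_upwards [condExp_comp_indep_eq_sum (ξ := fun ω => (τ i k ω, τ i' k ω))
    (h := fun q ω => ⟪G i q.1 ω, G i' q.2 ω⟫) (gtFilt_le h.measurable_tau h.measurable_s k)
    ((h.measurable_tau i k).prodMk (h.measurable_tau i' k)) (h.indep_tau_pair_gtFilt k i i')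
    (fun q => (hG i q.1).inner (hG i' q.2)) hint] with ω hω
  rw [hω, Fintype.sum_prod_type]
  simp_rw [h.measureReal_tau_pair_eq]
  split_ifs with hi
  · subst hi
    simp [ite_mul, mul_sum]
  · simp_rw [inner_smul_left, inner_smul_right, sum_inner, inner_sum, mul_sum]
    simp [mul_assoc]

theorem condExp_norm_blockAvg_sq (h : IsGTSagaSampling P τ s) {p : ℕ}
    {G : Fin n → Fin m → Ω → EuclideanSpace ℝ (Fin p)}
    (hG : ∀ i a, StronglyMeasurable[gtFilt τ s k] (G i a))
    (hL2 : ∀ i, MemLp (fun ω => G i (τ i k ω) ω) 2 P) :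
    P[fun ω => ‖blockAvg fun i => G i (τ i k ω) ω‖ ^ 2 | gtFilt τ s k] =ᵐ[P] fun ω =>
      ((n : ℝ)⁻¹) ^ 2 * ∑ i, ∑ i', if i = i' then (m : ℝ)⁻¹ * ∑ a, ‖G i a ω‖ ^ 2
        else ⟪(m : ℝ)⁻¹ • ∑ a, G i a ω, (m : ℝ)⁻¹ • ∑ b, G i' b ω⟫ := by
  set v : Fin n × Fin n → Ω → ℝ := fun q ω => ⟪G q.1 (τ q.1 k ω) ω, G q.2 (τ q.2 k ω) ω⟫
  have hv_int (q : Fin n × Fin n) : Integrable (v q) P := (hL2 q.1).integrable_inner (hL2 q.2)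
  have hexpand : (fun ω => ‖blockAvg fun i => G i (τ i k ω) ω‖ ^ 2)
      = ((n : ℝ)⁻¹) ^ 2 • ∑ q, v q := by
    ext ω
    simp [v, blockAvg, norm_smul, mul_pow, norm_sum_sq_eq_sum_sum_inner, Fintype.sum_prod_type]
  rw [hexpand]
  filter_upwards [condExp_smul (μ := P) (((n : ℝ)⁻¹) ^ 2) (∑ q, v q) (gtFilt τ s k),
    condExp_finsetSum (fun q _ => hv_int q) (gtFilt τ s k),
    ae_all_iff.mpr fun q : Fin n × Fin n => h.condExp_inner_tau_pair hG q.1 q.2 (hv_int q)]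
    with ω h_smul h_sum h_pair
  rw [h_smul, Pi.smul_apply, h_sum, smul_eq_mul, Finset.sum_apply, Fintype.sum_prod_type]
  exact congrArg _ (sum_congr rfl fun i _ => sum_congr rfl fun i' _ => h_pair (i, i'))

end IsGTSagaSampling

end Sampling

section Estimator

variable {n m p : ℕ} (f : Fin n → Fin m → EuclideanSpace ℝ (Fin p) → ℝ)

def sagaEstimator (X : Fin n → EuclideanSpace ℝ (Fin p))
    (Z : Fin n → Fin m → EuclideanSpace ℝ (Fin p)) (i : Fin n) (a : Fin m) :
    EuclideanSpace ℝ (Fin p) :=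
  gradient (f i a) (X i) - gradient (f i a) (Z i a) + (m : ℝ)⁻¹ • ∑ j, gradient (f i j) (Z i j)

variable {f}

theorem gradient_floc (hdiff : ∀ i j, Differentiable ℝ (f i j)) (i : Fin n)
    (u : EuclideanSpace ℝ (Fin p)) :
    gradient (floc f i) u = (m : ℝ)⁻¹ • ∑ j, gradient (f i j) u := by
  have hsum : fderiv ℝ (fun v => ∑ j, f i j v) u = ∑ j, fderiv ℝ (f i j) u :=
    fderiv_fun_sum fun j _ => (hdiff i j).differentiableAt
  have hfloc : fderiv ℝ (floc f i) u = (m : ℝ)⁻¹ • fderiv ℝ (fun v => ∑ j, f i j v) u :=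
    fderiv_const_mul (DifferentiableAt.fun_sum fun j _ => (hdiff i j).differentiableAt) _
  simp only [gradient, hfloc, hsum, map_smul, map_sum]

theorem mean_sagaEstimator [NeZero m] (hdiff : ∀ i j, Differentiable ℝ (f i j))
    (X : Fin n → EuclideanSpace ℝ (Fin p)) (Z : Fin n → Fin m → EuclideanSpace ℝ (Fin p))
    (i : Fin n) :
    (m : ℝ)⁻¹ • ∑ a, sagaEstimator f X Z i a = gradient (floc f i) (X i) := by
  have hm : (m : ℝ) ≠ 0 := NeZero.ne _
  rw [gradient_floc hdiff]
  unfold sagaEstimator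
  simp only [sum_add_distrib, sum_sub_distrib, sum_const, card_univ, Fintype.card_fin,
    ← Nat.cast_smul_eq_nsmul ℝ, smul_smul, mul_inv_cancel₀ hm, one_smul, smul_add, smul_sub]
  abel

theorem sagaEstimator_variance_le [NeZero m] (hdiff : ∀ i j, Differentiable ℝ (f i j)) {L : ℝ}
    (hL : 0 ≤ L) (hlip : ∀ i j, LipschitzWith L.toNNReal (gradient (f i j)))
    (X : Fin n → EuclideanSpace ℝ (Fin p)) (Z : Fin n → Fin m → EuclideanSpace ℝ (Fin p))
    (i : Fin n) (c : EuclideanSpace ℝ (Fin p)) :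
    (m : ℝ)⁻¹ * ∑ a, ‖sagaEstimator f X Z i a‖ ^ 2 - ‖gradient (floc f i) (X i)‖ ^ 2
      ≤ 2 * L ^ 2 * ‖X i - c‖ ^ 2 + 2 * L ^ 2 * ((m : ℝ)⁻¹ * ∑ a, ‖c - Z i a‖ ^ 2) := by
  set u : Fin m → EuclideanSpace ℝ (Fin p) :=
    fun a => gradient (f i a) (X i) - gradient (f i a) (Z i a)
  have hu : ∀ a, ‖u a‖ ^ 2 ≤ 2 * L ^ 2 * ‖X i - c‖ ^ 2 + 2 * L ^ 2 * ‖c - Z i a‖ ^ 2 := by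
    intro a
    have hlip_a : ‖u a‖ ≤ L * ‖X i - Z i a‖ := by
      simpa [Real.coe_toNNReal _ hL] using (hlip i a).norm_sub_le (X i) (Z i a)
    calc ‖u a‖ ^ 2 ≤ L ^ 2 * ‖X i - Z i a‖ ^ 2 := by
          rw [← mul_pow]; gcongr
      _ ≤ L ^ 2 * (2 * ‖X i - c‖ ^ 2 + 2 * ‖c - Z i a‖ ^ 2) := by
          gcongr; exact norm_sub_sq_le_two_mul_add _ _ _
      _ = _ := by ring
  have hvar :=
    mean_norm_sq_add_sub_norm_mean_sq_le u ((m : ℝ)⁻¹ • ∑ j, gradient (f i j) (Z i j))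
  simp only [Fintype.card_fin] at hvar
  rw [← mean_sagaEstimator hdiff X Z i]
  refine hvar.trans ?_
  calc (m : ℝ)⁻¹ * ∑ a, ‖u a‖ ^ 2
      ≤ (m : ℝ)⁻¹ * ∑ a, (2 * L ^ 2 * ‖X i - c‖ ^ 2 + 2 * L ^ 2 * ‖c - Z i a‖ ^ 2) := by
        gcongr with a; exact hu a
    _ = _ := by
        rw [sum_add_distrib, sum_const, card_univ, Fintype.card_fin, nsmul_eq_mul, ← mul_sum]
        field_simp [NeZero.ne (m : ℝ)]

theorem sagaEstimator_second_moment_le [NeZero m] (hdiff : ∀ i j, Differentiable ℝ (f i j))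
    {L : ℝ} (hL : 0 ≤ L) (hlip : ∀ i j, LipschitzWith L.toNNReal (gradient (f i j)))
    (X : Fin n → EuclideanSpace ℝ (Fin p)) (Z : Fin n → Fin m → EuclideanSpace ℝ (Fin p)) :
    ((n : ℝ)⁻¹) ^ 2 * ∑ i, ∑ i',
        (if i = i' then (m : ℝ)⁻¹ * ∑ a, ‖sagaEstimator f X Z i a‖ ^ 2
        else ⟪(m : ℝ)⁻¹ • ∑ a, sagaEstimator f X Z i a,
          (m : ℝ)⁻¹ • ∑ b, sagaEstimator f X Z i' b⟫)
      ≤ 2 * L ^ 2 / n ^ 2 * consSq X + 2 * L ^ 2 / n * tAux (blockAvg X) Z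
        + ‖gradfbar f X‖ ^ 2 := by
  simp_rw [mean_sagaEstimator hdiff X Z]
  rw [sum_sum_ite_inner_eq]
  have hvar := sum_le_sum fun i (_ : i ∈ univ) =>
    sagaEstimator_variance_le hdiff hL hlip X Z i (blockAvg X)
  rw [sum_add_distrib, ← mul_sum, ← mul_sum] at hvar
  have hgrad :
      ‖gradfbar f X‖ ^ 2 = ((n : ℝ)⁻¹) ^ 2 * ‖∑ i, gradient (floc f i) (X i)‖ ^ 2 := by
    rw [gradfbar, norm_smul, mul_pow, Real.norm_eq_abs, sq_abs]
  rw [hgrad, consSq, tAux]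
  calc _ ≤ ((n : ℝ)⁻¹) ^ 2 * (‖∑ i, gradient (floc f i) (X i)‖ ^ 2
        + (2 * L ^ 2 * ∑ i, ‖X i - blockAvg X‖ ^ 2
          + 2 * L ^ 2 * ∑ i, (m : ℝ)⁻¹ * ∑ a, ‖blockAvg X - Z i a‖ ^ 2)) := by gcongr
    _ = _ := by ring

end Estimator

section Adapted

variable {Ω : Type*} {n m p : ℕ} {f : Fin n → Fin m → EuclideanSpace ℝ (Fin p) → ℝ}

theorem measurable_sagaEstimator {F : MeasurableSpace Ω}
    (hgrad : ∀ i j, Continuous (gradient (f i j))) {X : Fin n → Ω → EuclideanSpace ℝ (Fin p)}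
    {Z : Fin n → Fin m → Ω → EuclideanSpace ℝ (Fin p)} (hX : ∀ i, Measurable[F] (X i))
    (hZ : ∀ i j, Measurable[F] (Z i j)) (i : Fin n) (a : Fin m) :
    Measurable[F] fun ω => sagaEstimator f (fun i => X i ω) (fun i j => Z i j ω) i a := by
  have hgrad_meas := fun i j => (hgrad i j).measurable
  unfold sagaEstimator
  fun_prop

theorem gtsaga_iterates_measurable (hgrad : ∀ i j, Continuous (gradient (f i j)))
    (w : Matrix (Fin n) (Fin n) ℝ) (α : ℝ) (τ s : Fin n → ℕ → Ω → Fin m)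
    (x y g : ℕ → Fin n → Ω → EuclideanSpace ℝ (Fin p))
    (z : ℕ → Fin n → Fin m → Ω → EuclideanSpace ℝ (Fin p)) (x0 : EuclideanSpace ℝ (Fin p))
    (hx0 : ∀ i ω, x 0 i ω = x0) (hz0 : ∀ i j ω, z 0 i j ω = x0) (hy0 : ∀ i ω, y 0 i ω = 0)
    (hgdef : ∀ k i ω,
      g k i ω = sagaEstimator f (fun i => x k i ω) (fun i j => z k i j ω) i (τ i k ω))
    (hydef : ∀ k i ω, y (k + 1) i ω =
      ∑ r, w i r • (y k r ω + g k r ω - (if k = 0 then 0 else g (k - 1) r ω)))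
    (hxdef : ∀ k i ω, x (k + 1) i ω = ∑ r, w i r • (x k r ω - α • y (k + 1) r ω))
    (hzdef : ∀ k i j ω, z (k + 1) i j ω = if j = s i k ω then x k i ω else z k i j ω) (k : ℕ) :
    (∀ i, Measurable[gtFilt τ s k] (x k i)) ∧ (∀ i j, Measurable[gtFilt τ s k] (z k i j))
      ∧ (∀ i, Measurable[gtFilt τ s k] (y k i))
      ∧ ∀ i, Measurable[gtFilt τ s k] fun ω => if k = 0 then 0 else g (k - 1) i ω := by
  -- The last conjunct is the `g^{k-1}` term of the `y`-recursion, carried along so that the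
  -- induction closes.
  induction k with
  | zero =>
    refine ⟨fun i => ?_, fun i j => ?_, fun i => ?_, fun i => ?_⟩
    · exact funext (hx0 i) ▸ measurable_const
    · exact funext (hz0 i j) ▸ measurable_const
    · exact funext (hy0 i) ▸ measurable_const
    · simp only [if_true]; exact measurable_const
  | succ k ih =>
    obtain ⟨hx, hz, hy, hprev⟩ := ih
    have mono {φ : Ω → EuclideanSpace ℝ (Fin p)} (hφ : Measurable[gtFilt τ s k] φ) :
        Measurable[gtFilt τ s (k + 1)] φ :=
      hφ.mono (gtFilt_mono k.le_succ) le_rfl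
    have hg : ∀ i, Measurable[gtFilt τ s (k + 1)] (g k i) := fun i =>
      funext (hgdef k i) ▸ Measurable.comp_countable_index
        (measurable_iff_comap_le.mpr (comap_tau_le_gtFilt k.lt_succ_self))
        fun a => mono (measurable_sagaEstimator hgrad hx hz i a)
    have hy' : ∀ i, Measurable[gtFilt τ s (k + 1)] (y (k + 1) i) := fun i =>
      funext (hydef k i) ▸ Finset.measurable_sum _ fun r _ =>
        (((mono (hy r)).add (hg r)).sub (mono (hprev r))).fun_const_smul _
    refine ⟨fun i => ?_, fun i j => ?_, hy', fun i => ?_⟩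
    · exact funext (hxdef k i) ▸ Finset.measurable_sum _ fun r _ =>
        ((mono (hx r)).sub ((hy' r).const_smul α)).fun_const_smul _
    · exact funext (hzdef k i j) ▸ Measurable.ite
        (measurable_iff_comap_le.mpr (comap_s_le_gtFilt (i := i) k.lt_succ_self)
          (measurableSet_singleton j))
        (mono (hx i)) (mono (hz i j))
    · simpa using hg i

end Adapted

theorem gtsaga_avg_estimator_bound_general
    {Ω : Type} [MeasurableSpace Ω] (P : Measure Ω) [IsProbabilityMeasure P]
    {n m p : ℕ} (hm : 1 ≤ m)
    (L : ℝ) (hL : 0 < L)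
    (f : Fin n → Fin m → EuclideanSpace ℝ (Fin p) → ℝ)
    (hdiff : ∀ i j, Differentiable ℝ (f i j))
    (hlip : ∀ i j, LipschitzWith L.toNNReal (gradient (f i j)))
    (w : Matrix (Fin n) (Fin n) ℝ)
    (τ s : Fin n → ℕ → Ω → Fin m)
    (hτmeas : ∀ i k, Measurable (τ i k)) (hsmeas : ∀ i k, Measurable (s i k))
    (hτunif : ∀ i k j, P {ω | τ i k ω = j} = (m : ℝ≥0∞)⁻¹)
    (hindep : iIndepFun
      (fun (q : Fin n × ℕ × Bool) ω => if q.2.2 then τ q.1 q.2.1 ω else s q.1 q.2.1 ω) P)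
    (α : ℝ)
    (x y g : ℕ → Fin n → Ω → EuclideanSpace ℝ (Fin p))
    (z : ℕ → Fin n → Fin m → Ω → EuclideanSpace ℝ (Fin p))
    (x0 : EuclideanSpace ℝ (Fin p))
    (hx0 : ∀ i ω, x 0 i ω = x0)
    (hz0 : ∀ i j ω, z 0 i j ω = x0)
    (hy0 : ∀ i ω, y 0 i ω = 0)
    (hgdef : ∀ k i ω, g k i ω =
      gradient (f i (τ i k ω)) (x k i ω) - gradient (f i (τ i k ω)) (z k i (τ i k ω) ω)
        + (m : ℝ)⁻¹ • ∑ j, gradient (f i j) (z k i j ω))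
    (hydef : ∀ k i ω, y (k + 1) i ω =
      ∑ r, w i r • (y k r ω + g k r ω - (if k = 0 then 0 else g (k - 1) r ω)))
    (hxdef : ∀ k i ω, x (k + 1) i ω = ∑ r, w i r • (x k r ω - α • y (k + 1) r ω))
    (hzdef : ∀ k i j ω, z (k + 1) i j ω = if j = s i k ω then x k i ω else z k i j ω)
    (hgL2 : ∀ k i, MemLp (g k i) 2 P)
    (k : ℕ) :
    ∀ᵐ ω ∂P,
      (P[fun ω' => ‖blockAvg (fun i => g k i ω')‖ ^ 2 | gtFilt τ s k]) ω
        ≤ 2 * L ^ 2 / n ^ 2 * consSq (fun i => x k i ω)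
          + 2 * L ^ 2 / n * tAux (blockAvg (fun i => x k i ω)) (fun i j => z k i j ω)
          + ‖gradfbar f (fun i => x k i ω)‖ ^ 2 := by
  have : NeZero m := ⟨by omega⟩
  have hgrad : ∀ i j, Continuous (gradient (f i j)) := fun i j => (hlip i j).continuous
  obtain ⟨hx, hz, -⟩ := gtsaga_iterates_measurable hgrad w α τ s x y g z x0 hx0 hz0 hy0 hgdef
    hydef hxdef hzdef k
  have hg : g k = fun i ω =>
      sagaEstimator f (fun i => x k i ω) (fun i j => z k i j ω) i (τ i k ω) :=
    funext₂ (hgdef k)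
  have hL2 := hgL2 k
  rw [hg] at hL2
  simp only [hg]
  filter_upwards [IsGTSagaSampling.condExp_norm_blockAvg_sq ⟨hτmeas, hsmeas, hτunif, hindep⟩
    (fun i a => (measurable_sagaEstimator hgrad hx hz i a).stronglyMeasurable) hL2] with ω hω
  exact hω ▸ sagaEstimator_second_moment_le hdiff hL.le hlip _ _

/-- GT-SAGA: bound on the conditional second moment of the averaged SAGA estimator. -/
theorem gtsaga_avg_estimator_bound
    {Ω : Type} [MeasurableSpace Ω] (P : Measure Ω) [IsProbabilityMeasure P]
    {n m p : ℕ} (hn : 1 ≤ n) (hm : 1 ≤ m)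
    (L : ℝ) (hL : 0 < L)
    (f : Fin n → Fin m → EuclideanSpace ℝ (Fin p) → ℝ)
    (hdiff : ∀ i j, Differentiable ℝ (f i j))
    (hlip : ∀ i j, LipschitzWith L.toNNReal (gradient (f i j)))
    (hFbdd : BddBelow (Set.range (fglob f)))
    (w : Matrix (Fin n) (Fin n) ℝ)
    (hrow : ∀ i, ∑ r, w i r = 1) (hcol : ∀ r, ∑ i, w i r = 1)
    (lam : ℝ) (hlam : lam = secondSV w) (hlam0 : 0 ≤ lam) (hlam1 : lam < 1)
    (τ s : Fin n → ℕ → Ω → Fin m)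
    (hτmeas : ∀ i k, Measurable (τ i k)) (hsmeas : ∀ i k, Measurable (s i k))
    (hτunif : ∀ i k j, P {ω | τ i k ω = j} = (m : ℝ≥0∞)⁻¹)
    (hsunif : ∀ i k j, P {ω | s i k ω = j} = (m : ℝ≥0∞)⁻¹)
    (hindep : iIndepFun
      (fun (q : Fin n × ℕ × Bool) ω => if q.2.2 then τ q.1 q.2.1 ω else s q.1 q.2.1 ω) P)
    (α : ℝ) (hα0 : 0 < α)
    (x y g : ℕ → Fin n → Ω → EuclideanSpace ℝ (Fin p))
    (z : ℕ → Fin n → Fin m → Ω → EuclideanSpace ℝ (Fin p))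
    (x0 : EuclideanSpace ℝ (Fin p))
    (hx0 : ∀ i ω, x 0 i ω = x0)
    (hz0 : ∀ i j ω, z 0 i j ω = x0)
    (hy0 : ∀ i ω, y 0 i ω = 0)
    (hgdef : ∀ k i ω, g k i ω =
      gradient (f i (τ i k ω)) (x k i ω) - gradient (f i (τ i k ω)) (z k i (τ i k ω) ω)
        + (m : ℝ)⁻¹ • ∑ j, gradient (f i j) (z k i j ω))
    (hydef : ∀ k i ω, y (k + 1) i ω =
      ∑ r, w i r • (y k r ω + g k r ω - (if k = 0 then 0 else g (k - 1) r ω)))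
    (hxdef : ∀ k i ω, x (k + 1) i ω = ∑ r, w i r • (x k r ω - α • y (k + 1) r ω))
    (hzdef : ∀ k i j ω, z (k + 1) i j ω = if j = s i k ω then x k i ω else z k i j ω)
    (hxL2 : ∀ k i, MemLp (x k i) 2 P)
    (hyL2 : ∀ k i, MemLp (y k i) 2 P)
    (hgL2 : ∀ k i, MemLp (g k i) 2 P)
    (hzL2 : ∀ k i j, MemLp (z k i j) 2 P)
    (k : ℕ) :
    ∀ᵐ ω ∂P,
      (P[fun ω' => ‖blockAvg (fun i => g k i ω')‖ ^ 2 | gtFilt τ s k]) ω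
        ≤ 2 * L ^ 2 / n ^ 2 * consSq (fun i => x k i ω)
          + 2 * L ^ 2 / n * tAux (blockAvg (fun i => x k i ω)) (fun i j => z k i j ω)
          + ‖gradfbar f (fun i => x k i ω)‖ ^ 2 :=
  gtsaga_avg_estimator_bound_general P hm L hL f hdiff hlip w τ s hτmeas hsmeas hτunif hindep α x y
    g z x0 hx0 hz0 hy0 hgdef hydef hxdef hzdef hgL2 k

end
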